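/- Let w = u a be a nonempty area sequence with u its prefix obtained by removing the last letter a. Then deleting from ψ(w) the letter at position i_0(ψ(w)) (the leftmost letter equal to the maximum value of ψ(w) in the rightmost block of consecutive maximal letters) yields exactly ψ(u). -/

import Mathlib

/-- The `i`-th letter of the word `w` (`1`-indexed, as in the paper);
defaults to `0` out of range. -/
def get1 (w : List ℕ) (i : ℕ) : ℕ := w.getD (i - 1) 0

/-- `w` is the area sequence of a Dyck path: the first letter is `0` and each
letter exceeds the previous one by at most one. -/
def IsAreaSeq (w : List ℕ) : Prop :=
  (w ≠ [] → get1 w 1 = 0) ∧ ∀ i, 1 ≤ i → i < w.length → get1 w (i + 1) ≤ get1 w i + 1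

/-- Insertion at position `i` (for `0 ≤ i ≤ n`): `ins w 0` prepends a `0`, and
for `1 ≤ i ≤ n`, `ins w i` inserts the letter `w_i + 1` just after position `i`. -/
def ins (w : List ℕ) (i : ℕ) : List ℕ :=
  w.take i ++ (if i = 0 then 0 else get1 w i + 1) :: w.drop i

/-- The area statistic: the sum of the letters. -/
def area (w : List ℕ) : ℕ := w.sum

/-- The dinv statistic: `dinv w = Σ_i d_i` where `d_i` is the number of `j > i`
with `w_j = w_i` or `w_j = w_i - 1`. -/
def dinv (w : List ℕ) : ℕ :=
  ∑ i ∈ Finset.Icc 1 w.length,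
    ((Finset.Ioc i w.length).filter
      (fun j => get1 w j = get1 w i ∨ get1 w j + 1 = get1 w i)).card

/-- The maximal value of a word (`0` for the empty word). -/
def maxVal (w : List ℕ) : ℕ := w.foldr max 0

/-- Positions of the letters of maximal value `m`. -/
def Maxb (w : List ℕ) : Finset ℕ :=
  (Finset.Icc 1 w.length).filter (fun i => get1 w i = maxVal w)

/-- Positions `i` with `w_i = m - 1` such that all letters after position `i`
are `< m`. -/
def Maxa (w : List ℕ) : Finset ℕ :=
  (Finset.Icc 1 w.length).filter (fun i =>
    get1 w i + 1 = maxVal w ∧ ∀ j ∈ Finset.Ioc i w.length, get1 w j < maxVal w)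

/-- The position of the leftmost letter equal to the maximal value `m` in the
rightmost block of consecutive letters equal to `m`. -/
def i0 (w : List ℕ) : ℕ :=
  ((Finset.Icc 1 w.length).filter (fun i =>
    get1 w i = maxVal w ∧ (i = 1 ∨ get1 w (i - 1) ≠ maxVal w))).sup id

/-- The admissible insertion positions of `w`, listed in admissible order:
the elements of `Maxb w` in decreasing order, then the elements of `Maxa w`
in decreasing order, then `i0 w - 1`.  The empty word has the single
admissible insertion position `0`. -/
def admissible (w : List ℕ) : List ℕ :=
  if w = [] then [0]
  else ((Maxb w).sort (· ≤ ·)).reverse ++ ((Maxa w).sort (· ≤ ·)).reverse ++ [i0 w - 1]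

/-- Auxiliary version of the map `ψ`, reading the reversed word. -/
def psiRev : List ℕ → List ℕ
  | [] => []
  | a :: u => ins (psiRev u) ((admissible (psiRev u)).getD a 0)

/-- The map `ψ`: `ψ(ε) = ε` and `ψ(u a) = ins_{c_a}(ψ(u))` where
`c_0, c_1, …, c_k` are the admissible insertion positions of `ψ(u)` in
admissible order. -/
def psi (w : List ℕ) : List ℕ := psiRev w.reverse

/-- The bounce sequence: `b_1 = 0`, and `b_i = b_{i-1} + 1` if
`b_{i-1} + 1 ≤ w_i`, otherwise `b_i = 0`. -/
def bseq (w : List ℕ) : ℕ → ℕ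
  | 0 => 0
  | 1 => 0
  | (i + 2) => if bseq w (i + 1) + 1 ≤ get1 w (i + 2) then bseq w (i + 1) + 1 else 0

/-- The bounces of `w`: positions `1 < i ≤ n` with `b_i = 0`. -/
def bounces (w : List ℕ) : Finset ℕ :=
  (Finset.Icc 2 w.length).filter (fun i => bseq w i = 0)

/-- The bounce statistic: the sum of the reversed positions `n - i + 1` of the
bounces of `w`. -/
def bounce (w : List ℕ) : ℕ := ∑ i ∈ bounces w, (w.length - i + 1)

/-!
`ψ(u a)` is `ψ(u)` with one letter inserted after the admissible position `c = c_a`, so it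
suffices that the inserted letter, at position `c + 1`, is `i0` of the new word. Each kind of
admissible insertion ensures this: at a position of `Maxb` it creates a new strict maximum; at a
position of `Maxa` it inserts a maximal letter with no maximal letter after it; at `i0 - 1` it
inserts a maximal letter (the letter there is `m - 1` by the area condition) that extends the
rightmost maximal block to the left.

The real point is that `c_a` exists, i.e. `a` is less than the number of admissible positions of
`ψ(u)`, rather than `getD` falling back to its default. This is an invariant: after inserting at
the `a`-th admissible position, the `a` positions preceding it in admissible order survive,
shifted, in `Maxb ∪ Maxa` of the new word, and the new letter lies in `Maxb`; so there are at
least `a + 2` admissible positions, while the next letter of an area sequence is at most `a + 1`.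
-/

open Finset

theorem List.getD_mem_of_lt {α : Type*} {l : List α} {i : ℕ} {d : α} (h : i < l.length) :
    l.getD i d ∈ l := by
  rw [List.getD_eq_getElem _ _ h]
  exact List.getElem_mem h

def insLetter (w : List ℕ) (c : ℕ) : ℕ := if c = 0 then 0 else get1 w c + 1

theorem ins_eq (w : List ℕ) (c : ℕ) : ins w c = w.take c ++ insLetter w c :: w.drop c := rfl

section Insertion

variable {w : List ℕ} {c : ℕ}

theorem length_ins (hc : c ≤ w.length) : (ins w c).length = w.length + 1 := by
  simp [ins_eq]; omega

theorem get1_ins_of_le {i : ℕ} (hc : c ≤ w.length) (hi : 1 ≤ i) (hic : i ≤ c) :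
    get1 (ins w c) i = get1 w i := by
  simp only [get1, ins_eq, List.getD_eq_getElem?_getD]
  rw [List.getElem?_append_left (by simp; omega), List.getElem?_take_of_lt (by omega)]

theorem get1_ins_succ (hc : c ≤ w.length) : get1 (ins w c) (c + 1) = insLetter w c := by
  simp [get1, ins_eq, Nat.min_eq_left hc]

theorem get1_ins_of_lt {i : ℕ} (hc : c ≤ w.length) (hci : c + 1 < i) :
    get1 (ins w c) i = get1 w (i - 1) := by
  obtain ⟨k, rfl⟩ : ∃ k, i = c + k + 2 := ⟨i - c - 2, by omega⟩
  simp only [get1, ins_eq, List.getD_eq_getElem?_getD]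
  rw [List.getElem?_append_right (by simp; omega)]
  simp [Nat.min_eq_left hc, show c + k + 1 - c = k + 1 by omega]

theorem eraseIdx_ins (hc : c ≤ w.length) : (ins w c).eraseIdx c = w := by
  rw [ins_eq, List.eraseIdx_append_of_length_le (by simp)]
  simp [Nat.min_eq_left hc]

theorem ins_perm (w : List ℕ) (c : ℕ) : List.Perm (ins w c) (insLetter w c :: w) := by
  simpa [ins_eq] using (List.perm_middle (a := insLetter w c) (l₁ := w.take c) (l₂ := w.drop c))

end Insertion

section MaxVal

theorem le_maxVal {w : List ℕ} {x : ℕ} (hx : x ∈ w) : x ≤ maxVal w :=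
  List.le_max_of_le (l := w) hx le_rfl

theorem get1_le_maxVal (w : List ℕ) (i : ℕ) : get1 w i ≤ maxVal w := by
  rcases lt_or_ge (i - 1) w.length with h | h
  · rw [get1, List.getD_eq_getElem _ _ h]; exact le_maxVal (List.getElem_mem h)
  · rw [get1, List.getD_eq_default _ _ h]; exact Nat.zero_le _

theorem exists_get1_eq_maxVal {w : List ℕ} (hw : w ≠ []) :
    ∃ i, 1 ≤ i ∧ i ≤ w.length ∧ get1 w i = maxVal w := by
  have hmem : maxVal w ∈ w := List.maximum_mem (List.foldr_max_of_ne_nil hw).symm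
  obtain ⟨k, hk, hkw⟩ := List.getElem_of_mem hmem
  exact ⟨k + 1, by omega, by omega, by simp [get1, List.getElem?_eq_getElem hk, hkw]⟩

theorem maxVal_ins (w : List ℕ) (c : ℕ) : maxVal (ins w c) = max (insLetter w c) (maxVal w) :=
  (ins_perm w c).foldr_op_eq

end MaxVal

section AreaSeq

variable {w u : List ℕ} {c : ℕ}

theorem IsAreaSeq.ins (hw : IsAreaSeq w) (hc : c ≤ w.length) : IsAreaSeq (ins w c) := by
  have hstep : ∀ i, 1 ≤ i → i < w.length → get1 w (i + 1) ≤ get1 w i + 1 := hw.2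
  refine ⟨fun _ => ?_, fun i hi1 hi2 => ?_⟩
  · rcases Nat.eq_zero_or_pos c with rfl | hc0
    · simpa [insLetter] using get1_ins_succ hc
    · rw [get1_ins_of_le hc le_rfl hc0]
      exact hw.1 (by rintro rfl; simp at hc; omega)
  rw [length_ins hc] at hi2
  rcases lt_trichotomy (i + 1) (c + 1) with h | h | h
  · rw [get1_ins_of_le hc (by omega) (by omega), get1_ins_of_le hc hi1 (by omega)]
    exact hstep i hi1 (by omega)
  · obtain rfl : i = c := by omega
    rw [get1_ins_succ hc, get1_ins_of_le hc hi1 le_rfl, insLetter, if_neg (by omega)]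
  rcases (show i = c + 1 ∨ c + 1 < i by omega) with rfl | h'
  · rw [get1_ins_succ hc, get1_ins_of_lt hc (by omega), Nat.add_sub_cancel, insLetter]
    split_ifs with hc0
    · subst hc0
      have := hw.1 (by rintro rfl; simp at hi2)
      simp_all [get1]
    · have := hstep c (by omega) (by omega)
      omega
  · rw [get1_ins_of_lt hc (by omega), get1_ins_of_lt hc h', show i + 1 - 1 = i - 1 + 1 by omega]
    exact hstep (i - 1) (by omega) (by omega)

theorem IsAreaSeq.of_append {v : List ℕ} (h : IsAreaSeq (u ++ v)) : IsAreaSeq u := by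
  have hget : ∀ i, i ≤ u.length → 1 ≤ i → get1 (u ++ v) i = get1 u i := fun i hi hi1 => by
    simp only [get1, List.getD_eq_getElem?_getD]
    rw [List.getElem?_append_left (by omega)]
  refine ⟨fun hu => ?_, fun i hi1 hi2 => ?_⟩
  · have hu' : 1 ≤ u.length := List.length_pos_iff.2 hu
    rw [← hget 1 hu' le_rfl]
    exact h.1 (by simp [hu])
  · rw [← hget i hi2.le hi1, ← hget (i + 1) hi2 (by omega)]
    exact h.2 i hi1 (by simp; omega)

theorem IsAreaSeq.eq_zero_of_singleton {a : ℕ} (h : IsAreaSeq [a]) : a = 0 := by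
  simpa [get1] using h.1

theorem IsAreaSeq.le_add_one_of_append {a b : ℕ} (h : IsAreaSeq (u ++ [b, a])) : a ≤ b + 1 := by
  simpa [get1, List.getElem?_append_right] using h.2 (u.length + 1) (by omega) (by simp)

end AreaSeq

section BlockStart

def maxBlockStarts (w : List ℕ) : Finset ℕ :=
  {i ∈ Icc 1 w.length | get1 w i = maxVal w ∧ (i = 1 ∨ get1 w (i - 1) ≠ maxVal w)}

variable {w : List ℕ} {c : ℕ}

theorem i0_eq_sup_maxBlockStarts (w : List ℕ) : i0 w = (maxBlockStarts w).sup id := rfl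

theorem mem_maxBlockStarts {i : ℕ} : i ∈ maxBlockStarts w ↔
    1 ≤ i ∧ i ≤ w.length ∧ get1 w i = maxVal w ∧ (i = 1 ∨ get1 w (i - 1) ≠ maxVal w) := by
  simp [maxBlockStarts, and_assoc]

theorem le_i0 {i : ℕ} (hi : i ∈ maxBlockStarts w) : i ≤ i0 w :=
  Finset.le_sup (f := id) hi

theorem i0_le_length (w : List ℕ) : i0 w ≤ w.length :=
  Finset.sup_le fun _ hi => (mem_maxBlockStarts.1 hi).2.1

theorem i0_eq_of_forall_le {j : ℕ} (hj : j ∈ maxBlockStarts w)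
    (hmax : ∀ i ∈ maxBlockStarts w, i ≤ j) : i0 w = j :=
  le_antisymm (Finset.sup_le hmax) (le_i0 hj)

theorem i0_mem_maxBlockStarts (hw : w ≠ []) : i0 w ∈ maxBlockStarts w := by
  have hex := exists_get1_eq_maxVal hw
  obtain ⟨h1, hl, hm⟩ := Nat.find_spec hex
  -- the first maximal letter starts a block
  have hne : (maxBlockStarts w).Nonempty := by
    refine ⟨Nat.find hex, mem_maxBlockStarts.2 ⟨h1, hl, hm, or_iff_not_imp_left.2 fun h1' hprev =>
      Nat.find_min hex (m := Nat.find hex - 1) (by omega) ⟨by omega, by omega, hprev⟩⟩⟩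
  obtain ⟨j, hj, hsup⟩ := Finset.exists_mem_eq_sup _ hne id
  rwa [i0_eq_sup_maxBlockStarts, hsup]

theorem i0_ins (hc : c ≤ w.length) (hx : maxVal w ≤ insLetter w c)
    (hstart : ∀ j, c + 1 < j → j ≤ w.length → get1 w j = insLetter w c →
      get1 w (j - 1) = insLetter w c) :
    i0 (ins w c) = c + 1 := by
  have hmax : maxVal (ins w c) = insLetter w c := by rw [maxVal_ins]; omega
  have hlen := length_ins hc
  refine i0_eq_of_forall_le (mem_maxBlockStarts.2 ⟨by omega, by omega, ?_, ?_⟩) ?_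
  · rw [get1_ins_succ hc, hmax]
  · refine or_iff_not_imp_left.2 fun hc0 => ?_
    rw [Nat.add_sub_cancel, get1_ins_of_le hc (by omega) le_rfl, hmax, insLetter, if_neg (by omega)]
    omega
  intro j hj
  obtain ⟨-, hjl, hjx, hj1⟩ := mem_maxBlockStarts.1 hj
  by_contra! hcj
  rw [hmax] at hjx hj1
  rcases hj1 with hj1 | hj1
  · omega
  rw [get1_ins_of_lt hc hcj] at hjx
  rcases (show j - 1 = c + 1 ∨ c + 1 < j - 1 by omega) with h | h
  · rw [h, get1_ins_succ hc] at hj1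
    exact hj1 rfl
  · rw [get1_ins_of_lt hc h] at hj1
    exact hj1 (hstart (j - 1) h (by omega) hjx)

end BlockStart

section Admissible

variable {w : List ℕ} {c : ℕ}

theorem mem_Maxb : c ∈ Maxb w ↔ 1 ≤ c ∧ c ≤ w.length ∧ get1 w c = maxVal w := by
  simp [Maxb, and_assoc]

theorem mem_Maxa : c ∈ Maxa w ↔ 1 ≤ c ∧ c ≤ w.length ∧ get1 w c + 1 = maxVal w ∧
    ∀ j, c < j → j ≤ w.length → get1 w j < maxVal w := by
  simp [Maxa, and_assoc]

theorem insLetter_of_mem_Maxb (hc : c ∈ Maxb w) : insLetter w c = maxVal w + 1 := by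
  obtain ⟨hc1, -, hcm⟩ := mem_Maxb.1 hc
  rw [insLetter, if_neg (by omega), hcm]

theorem insLetter_of_mem_Maxa (hc : c ∈ Maxa w) : insLetter w c = maxVal w := by
  obtain ⟨hc1, -, hcm, -⟩ := mem_Maxa.1 hc
  rw [insLetter, if_neg (by omega), hcm]

theorem insLetter_i0_sub_one (hw : IsAreaSeq w) (hne : w ≠ []) :
    insLetter w (i0 w - 1) = maxVal w := by
  obtain ⟨h1, hl, hm, hstart⟩ := mem_maxBlockStarts.1 (i0_mem_maxBlockStarts hne)
  rw [insLetter]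
  split_ifs with h0
  · have := hw.1 hne
    rw [show i0 w = 1 by omega] at hm
    omega
  · have hstep := hw.2 (i0 w - 1) (by omega) (by omega)
    rw [Nat.sub_add_cancel h1, hm] at hstep
    have := get1_le_maxVal w (i0 w - 1)
    have := hstart.resolve_left (by omega)
    omega

theorem mem_admissible : c ∈ admissible w ↔
    (w = [] ∧ c = 0) ∨ (w ≠ [] ∧ (c ∈ Maxb w ∨ c ∈ Maxa w ∨ c = i0 w - 1)) := by
  by_cases hw : w = [] <;> simp [admissible, hw]

theorem le_length_of_mem_admissible (hc : c ∈ admissible w) : c ≤ w.length := by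
  rcases mem_admissible.1 hc with ⟨-, rfl⟩ | ⟨-, hb | ha | rfl⟩
  · exact Nat.zero_le _
  · exact (mem_Maxb.1 hb).2.1
  · exact (mem_Maxa.1 ha).2.1
  · exact (Nat.sub_le _ 1).trans (i0_le_length w)

theorem i0_ins_of_mem_admissible (hw : IsAreaSeq w) (hc : c ∈ admissible w) :
    i0 (ins w c) = c + 1 := by
  have hcl := le_length_of_mem_admissible hc
  rcases mem_admissible.1 hc with ⟨rfl, rfl⟩ | ⟨hne, hb | ha | rfl⟩
  · decide
  · refine i0_ins hcl (by rw [insLetter_of_mem_Maxb hb]; omega) fun j _ _ hj => ?_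
    have := get1_le_maxVal w j
    rw [insLetter_of_mem_Maxb hb] at hj
    omega
  · refine i0_ins hcl (insLetter_of_mem_Maxa ha).ge fun j hj hjl hjm => ?_
    have := (mem_Maxa.1 ha).2.2.2 j (by omega) hjl
    rw [insLetter_of_mem_Maxa ha] at hjm
    omega
  · have hx := insLetter_i0_sub_one hw hne
    refine i0_ins hcl hx.ge fun j hj hjl hjm => ?_
    rw [hx] at hjm ⊢
    by_contra hprev
    have := le_i0 (mem_maxBlockStarts.2 ⟨by omega, hjl, hjm, Or.inr hprev⟩)
    omega

end Admissible

section SortedFinset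

theorem getD_sort_reverse_mem (s : Finset ℕ) {a : ℕ} (ha : a < #s) :
    (s.sort (· ≤ ·)).reverse.getD a 0 ∈ s := by
  rw [List.getD_eq_getElem _ _ (by simpa using ha), ← Finset.mem_sort (· ≤ ·), ← List.mem_reverse]
  exact List.getElem_mem _

theorem le_card_filter_lt_getD_sort_reverse (s : Finset ℕ) {a : ℕ} (ha : a < #s) :
    a ≤ #{p ∈ s | (s.sort (· ≤ ·)).reverse.getD a 0 < p} := by
  set L := (s.sort (· ≤ ·)).reverse
  have haL : a < L.length := by simpa [L] using ha
  have hL : L.Pairwise (· > ·) := (Finset.sortedLT_sort s).reverse.pairwise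
  rw [← L.take_append_drop a, List.drop_eq_getElem_cons haL, List.pairwise_append] at hL
  obtain ⟨hnd, -, hgt⟩ := hL
  calc a = (L.take a).toFinset.card := by
        rw [List.toFinset_card_of_nodup (hnd.imp ne_of_gt), List.length_take]; omega
    _ ≤ _ := Finset.card_le_card fun p hp => by
        rw [List.mem_toFinset] at hp
        refine Finset.mem_filter.2 ⟨?_, ?_⟩
        · rw [← Finset.mem_sort (· ≤ ·), ← List.mem_reverse]
          exact List.mem_of_mem_take hp
        · rw [List.getD_eq_getElem _ _ haL]
          exact hgt p hp _ List.mem_cons_self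

end SortedFinset

section Counting

variable {w : List ℕ} {c a : ℕ}

theorem admissible_of_ne_nil (hw : w ≠ []) : admissible w =
    ((Maxb w).sort (· ≤ ·)).reverse ++ (((Maxa w).sort (· ≤ ·)).reverse ++ [i0 w - 1]) := by
  rw [admissible, if_neg hw, List.append_assoc]

theorem length_admissible (hw : w ≠ []) :
    (admissible w).length = #(Maxb w) + #(Maxa w) + 1 := by
  simp [admissible_of_ne_nil hw]; omega

theorem getD_admissible_of_lt (hw : w ≠ []) (ha : a < #(Maxb w)) :
    (admissible w).getD a 0 = ((Maxb w).sort (· ≤ ·)).reverse.getD a 0 := by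
  rw [admissible_of_ne_nil hw, List.getD_append _ _ _ _ (by simpa using ha)]

theorem getD_admissible_of_le_of_lt (hw : w ≠ []) (h₁ : #(Maxb w) ≤ a)
    (h₂ : a < #(Maxb w) + #(Maxa w)) :
    (admissible w).getD a 0 = ((Maxa w).sort (· ≤ ·)).reverse.getD (a - #(Maxb w)) 0 := by
  rw [admissible_of_ne_nil hw, List.getD_append_right _ _ _ _ (by simpa using h₁),
    List.getD_append _ _ _ _ (by simp; omega)]
  simp

theorem getD_admissible_card (hw : w ≠ []) :
    (admissible w).getD (#(Maxb w) + #(Maxa w)) 0 = i0 w - 1 := by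
  rw [admissible_of_ne_nil hw, List.getD_append_right _ _ _ _ (by simp),
    List.getD_append_right _ _ _ _ (by simp)]
  simp

theorem card_filter_Maxb_lt_add_one_le (hc : c ≤ w.length)
    (hx : insLetter w c = maxVal w + 1) :
    #{p ∈ Maxb w | c < p} + 1 ≤ #(Maxb (ins w c)) + #(Maxa (ins w c)) := by
  have hmax : maxVal (ins w c) = maxVal w + 1 := by rw [maxVal_ins, hx]; omega
  have hlen := length_ins hc
  have hb : 0 < #(Maxb (ins w c)) :=
    Finset.card_pos.2 ⟨c + 1, mem_Maxb.2 ⟨by omega, by omega, by rw [get1_ins_succ hc, hmax, hx]⟩⟩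
  have ha : #{p ∈ Maxb w | c < p} ≤ #(Maxa (ins w c)) := by
    refine Finset.card_le_card_of_injOn (· + 1) (fun p hp => ?_) (add_left_injective 1).injOn
    obtain ⟨hp, hcp⟩ := Finset.mem_filter.1 hp
    dsimp only
    obtain ⟨-, hpl, hpm⟩ := mem_Maxb.1 hp
    refine mem_Maxa.2 ⟨by omega, by omega, ?_, fun j hj hjl => ?_⟩
    · rw [get1_ins_of_lt hc (by omega), Nat.add_sub_cancel, hpm, hmax]
    · rw [get1_ins_of_lt hc (by omega), hmax]
      exact Nat.lt_succ_of_le (get1_le_maxVal w _)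
  omega

theorem card_Maxb_add_card_filter_Maxa_lt_add_one_le (hc : c ≤ w.length)
    (hx : insLetter w c = maxVal w) :
    #(Maxb w) + #{p ∈ Maxa w | c < p} + 1 ≤ #(Maxb (ins w c)) + #(Maxa (ins w c)) := by
  have hmax : maxVal (ins w c) = maxVal w := by rw [maxVal_ins, hx]; omega
  have hlen := length_ins hc
  have hnew : c + 1 ∈ Maxb (ins w c) :=
    mem_Maxb.2 ⟨by omega, by omega, by rw [get1_ins_succ hc, hmax, hx]⟩
  have hb : #(Maxb w) ≤ #((Maxb (ins w c)).erase (c + 1)) := by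
    refine Finset.card_le_card_of_injOn (fun p => if p ≤ c then p else p + 1) (fun p hp => ?_)
      (fun p _ q _ hpq => by simp only at hpq; split_ifs at hpq <;> omega)
    obtain ⟨hp1, hpl, hpm⟩ := mem_Maxb.1 hp
    dsimp only
    split_ifs with hpc
    · refine Finset.mem_erase.2 ⟨by omega, mem_Maxb.2 ⟨hp1, by omega, ?_⟩⟩
      rw [get1_ins_of_le hc hp1 hpc, hpm, hmax]
    · refine Finset.mem_erase.2 ⟨by omega, mem_Maxb.2 ⟨by omega, by omega, ?_⟩⟩
      rw [get1_ins_of_lt hc (by omega), Nat.add_sub_cancel, hpm, hmax]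
  rw [Finset.card_erase_of_mem hnew] at hb
  have ha : #{p ∈ Maxa w | c < p} ≤ #(Maxa (ins w c)) := by
    refine Finset.card_le_card_of_injOn (· + 1) (fun p hp => ?_) (add_left_injective 1).injOn
    obtain ⟨hp, hcp⟩ := Finset.mem_filter.1 hp
    dsimp only
    obtain ⟨-, hpl, hpm, htail⟩ := mem_Maxa.1 hp
    refine mem_Maxa.2 ⟨by omega, by omega, ?_, fun j hj hjl => ?_⟩
    · rw [get1_ins_of_lt hc (by omega), Nat.add_sub_cancel, hpm, hmax]
    · rw [get1_ins_of_lt hc (by omega), hmax]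
      exact htail (j - 1) (by omega) (by omega)
  have := Finset.card_pos.2 ⟨_, hnew⟩
  omega

theorem filter_Maxa_i0_sub_one_lt (hne : w ≠ []) :
    {p ∈ Maxa w | i0 w - 1 < p} = Maxa w := by
  obtain ⟨h1, hl, hm, -⟩ := mem_maxBlockStarts.1 (i0_mem_maxBlockStarts hne)
  refine Finset.filter_true_of_mem fun p hp => ?_
  obtain ⟨-, -, -, htail⟩ := mem_Maxa.1 hp
  by_contra! hp
  have := htail (i0 w) (by omega) hl
  omega

theorem lt_length_admissible_ins (hw : IsAreaSeq w)
    (ha : a < (admissible w).length) :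
    a + 1 < (admissible (ins w ((admissible w).getD a 0))).length := by
  rw [length_admissible (by simp [ins_eq])]
  rcases eq_or_ne w [] with rfl | hne
  · obtain rfl : a = 0 := by simpa [admissible] using ha
    decide
  have hcl : (admissible w).getD a 0 ≤ w.length :=
    le_length_of_mem_admissible (List.getD_mem_of_lt ha)
  rw [length_admissible hne] at ha
  rcases lt_or_ge a #(Maxb w) with h₁ | h₁
  · have hc := getD_admissible_of_lt hne h₁
    have hb := getD_sort_reverse_mem _ h₁
    have := le_card_filter_lt_getD_sort_reverse _ h₁
    rw [← hc] at hb this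
    have := card_filter_Maxb_lt_add_one_le hcl (insLetter_of_mem_Maxb hb)
    omega
  rcases lt_or_ge a (#(Maxb w) + #(Maxa w)) with h₂ | h₂
  · have h₃ : a - #(Maxb w) < #(Maxa w) := by omega
    have hc := getD_admissible_of_le_of_lt hne h₁ h₂
    have hb := getD_sort_reverse_mem _ h₃
    have := le_card_filter_lt_getD_sort_reverse _ h₃
    rw [← hc] at hb this
    have := card_Maxb_add_card_filter_Maxa_lt_add_one_le hcl (insLetter_of_mem_Maxa hb)
    omega
  obtain rfl : a = #(Maxb w) + #(Maxa w) := by omega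
  rw [getD_admissible_card hne] at hcl ⊢
  have := card_Maxb_add_card_filter_Maxa_lt_add_one_le hcl (insLetter_i0_sub_one hw hne)
  rw [filter_Maxa_i0_sub_one_lt hne] at this
  omega

end Counting

section Psi

theorem psi_append_singleton (u : List ℕ) (a : ℕ) :
    psi (u ++ [a]) = ins (psi u) ((admissible (psi u)).getD a 0) := by
  simp [psi, psiRev]

theorem getD_admissible_le_length (w : List ℕ) (a : ℕ) : (admissible w).getD a 0 ≤ w.length := by
  rcases lt_or_ge a (admissible w).length with ha | ha
  · exact le_length_of_mem_admissible (List.getD_mem_of_lt ha)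
  · rw [List.getD_eq_default _ _ ha]
    exact Nat.zero_le _

theorem isAreaSeq_psi (u : List ℕ) : IsAreaSeq (psi u) := by
  induction u using List.reverseRecOn with
  | nil => exact ⟨fun h => absurd rfl h, fun i _ hi => by simp [psi, psiRev] at hi⟩
  | append_singleton u a ih =>
    rw [psi_append_singleton]
    exact ih.ins (getD_admissible_le_length _ _)

theorem lt_length_admissible_psi {u : List ℕ} {a : ℕ} (hw : IsAreaSeq (u ++ [a])) :
    a < (admissible (psi u)).length := by
  induction u using List.reverseRecOn generalizing a with
  | nil =>
    rw [hw.eq_zero_of_singleton]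
    decide
  | append_singleton u b ih =>
    have hab : a ≤ b + 1 := IsAreaSeq.le_add_one_of_append (by simpa using hw)
    have := lt_length_admissible_ins (isAreaSeq_psi u) (ih (hw.of_append (v := [a])))
    rw [psi_append_singleton]
    omega

end Psi

/-- For a nonempty area sequence `w = u a`, deleting from `ψ w` the letter at
position `i0 (ψ w)` (the leftmost letter equal to the maximal value of `ψ w`
in the rightmost block of consecutive maximal letters) yields exactly `ψ u`. -/
theorem eraseIdx_i0_psi (u : List ℕ) (a : ℕ) (hw : IsAreaSeq (u ++ [a])) :
    (psi (u ++ [a])).eraseIdx (i0 (psi (u ++ [a])) - 1) = psi u := by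
  have hc : (admissible (psi u)).getD a 0 ∈ admissible (psi u) :=
    List.getD_mem_of_lt (lt_length_admissible_psi hw)
  rw [psi_append_singleton, i0_ins_of_mem_admissible (isAreaSeq_psi u) hc, Nat.add_sub_cancel,
    eraseIdx_ins (le_length_of_mem_admissible hc)]
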